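/- arXiv:1106.0839 — 4 statements merged into one kernel-verified Lean document; each statement's English description precedes it below -/
import Mathlib

section
/- Let K be an algebraically closed field and let P be a homogeneous prime ideal in K[T_1,...,T_n] whose vanishing locus V ⊆ K^n is closed under addition (as well as under scalar multiplication, which is automatic since P is homogeneous). Then P is generated by linear forms. -/
/-!
The zero locus `V` of a proper homogeneous ideal contains `0` and is stable under scaling, so
additivity makes it a linear subspace. For a subspace `W ⊆ K^n` pick linear forms `π i` describing
a projection onto `W`: a polynomial `f` vanishing on `W` satisfies `f ∘ π = 0` (over an infinite
field), hence lies in the ideal generated by the linear forms `X i - π i`, which vanish on `W`.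
So `I(W)` is generated by linear forms, and the Nullstellensatz gives `P = I(V)`.
-/

open MvPolynomial

namespace MvPolynomial

variable {σ R K : Type*}

theorem IsHomogeneous.eval_smul [CommSemiring R] {p : MvPolynomial σ R} {k : ℕ}
    (hp : p.IsHomogeneous k) (a : R) (x : σ → R) : eval (a • x) p = a ^ k * eval x p := by
  rw [eval_eq, eval_eq, Finset.mul_sum]
  refine Finset.sum_congr rfl fun d hd => ?_
  have hdeg : ∑ i ∈ d.support, d i = k := by
    simpa [Finsupp.weight_apply, Finsupp.sum] using hp (mem_support_iff.mp hd)
  simp only [Pi.smul_apply, smul_eq_mul, mul_pow, Finset.prod_mul_distrib,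
    Finset.prod_pow_eq_pow_sum, hdeg]
  ring

theorem sub_bind₁_mem_span_X_sub [CommRing R] (g : σ → MvPolynomial σ R) (f : MvPolynomial σ R) :
    f - bind₁ g f ∈ Ideal.span (Set.range fun i => X i - g i) := by
  induction f using MvPolynomial.induction_on with
  | C a => simp
  | add p q hp hq => simpa only [map_add, add_sub_add_comm] using Ideal.add_mem _ hp hq
  | mul_X p i hp =>
    rw [map_mul, bind₁_X_right,
      show p * X i - bind₁ g p * g i = p * (X i - g i) + (p - bind₁ g p) * g i by ring]
    exact Ideal.add_mem _ (Ideal.mul_mem_left _ _ (Ideal.subset_span ⟨i, rfl⟩))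
      (Ideal.mul_mem_right _ _ hp)

section Field

variable [Field K] {I : Ideal (MvPolynomial σ K)}

theorem smul_mem_zeroLocus (hI : ∀ p ∈ I, ∀ k : ℕ, homogeneousComponent k p ∈ I)
    {x : σ → K} (hx : x ∈ zeroLocus K I) (a : K) : a • x ∈ zeroLocus K I := by
  intro p hp
  rw [aeval_eq_eval, ← sum_homogeneousComponent p, map_sum]
  refine Finset.sum_eq_zero fun k _ => ?_
  rw [(homogeneousComponent_isHomogeneous k p).eval_smul, ← aeval_eq_eval,
    hx _ (hI p hp k), mul_zero]

theorem zero_mem_zeroLocus (hI : ∀ p ∈ I, ∀ k : ℕ, homogeneousComponent k p ∈ I) (hI_ne : I ≠ ⊤) :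
    (0 : σ → K) ∈ zeroLocus K I := by
  intro p hp
  have hC : C (coeff 0 p) ∈ I := homogeneousComponent_zero p ▸ hI p hp 0
  rw [aeval_eq_eval, eval_zero]
  by_contra hne
  exact hI_ne (I.eq_top_of_isUnit_mem hC ((isUnit_iff_ne_zero.mpr hne).map C))

theorem vanishingIdeal_submodule_eq_span_isHomogeneous_one [Fintype σ] [Infinite K]
    (W : Submodule K (σ → K)) :
    vanishingIdeal K (W : Set (σ → K)) =
      Ideal.span {p | p ∈ vanishingIdeal K (W : Set (σ → K)) ∧ p.IsHomogeneous 1} := by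
  classical
  refine le_antisymm (fun f hf => ?_) (Ideal.span_le.2 fun p hp => hp.1)
  obtain ⟨r, hr⟩ := W.subtype.exists_leftInverse_of_injective W.ker_subtype
  set π := (LinearMap.toMatrix' (W.subtype ∘ₗ r)).toMvPolynomial
  have eval_π (x : σ → K) (i : σ) : eval x (π i) = W.subtype (r x) i := by
    rw [Matrix.toMvPolynomial_eval_eq_apply, LinearMap.toMatrix'_mulVec, LinearMap.comp_apply]
  have r_fix {x : σ → K} (hx : x ∈ W) : W.subtype (r x) = x :=
    congrArg Subtype.val (LinearMap.congr_fun hr ⟨x, hx⟩)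
  have hbind : bind₁ π f = 0 := funext fun x => by
    rw [map_zero, ← aeval_eq_eval, aeval_bind₁]
    simp only [aeval_eq_eval, eval_π]
    exact hf _ (r x).2
  have hspan := sub_bind₁_mem_span_X_sub π f
  rw [hbind, sub_zero] at hspan
  refine Ideal.span_mono ?_ hspan
  rintro _ ⟨i, rfl⟩
  refine ⟨fun x hx => ?_, (isHomogeneous_X K i).sub (Matrix.toMvPolynomial_isHomogeneous _ i)⟩
  rw [aeval_eq_eval, map_sub, eval_X, eval_π, r_fix hx, sub_self]

end Field

end MvPolynomial

/-- Let `K` be an algebraically closed field and `P` a homogeneous prime ideal of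
`K[T_1,…,T_n]` whose vanishing locus `V ⊆ K^n` is closed under addition. Then `P` is
generated by linear forms. -/
theorem homogeneous_prime_with_additive_variety_is_linear
    (K : Type*) [Field K] [IsAlgClosed K] (n : ℕ)
    (P : Ideal (MvPolynomial (Fin n) K)) (hprime : P.IsPrime)
    (hhom : ∀ p ∈ P, ∀ k : ℕ, MvPolynomial.homogeneousComponent k p ∈ P)
    (hadd : ∀ c d : Fin n → K,
      (∀ H ∈ P, MvPolynomial.eval c H = 0) → (∀ H ∈ P, MvPolynomial.eval d H = 0) →
      (∀ H ∈ P, MvPolynomial.eval (c + d) H = 0)) :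
    P = Ideal.span {p : MvPolynomial (Fin n) K | p ∈ P ∧ p.IsHomogeneous 1} := by
  let V : Submodule K (Fin n → K) :=
    { carrier := zeroLocus K P
      add_mem' := fun {c d} hc hd => by
        simp only [mem_zeroLocus_iff, aeval_eq_eval] at *
        exact hadd c d hc hd
      zero_mem' := zero_mem_zeroLocus hhom hprime.ne_top
      smul_mem' := fun a _ hx => smul_mem_zeroLocus hhom hx a }
  rw [← IsPrime.vanishingIdeal_zeroLocus (K := K) P]
  exact vanishingIdeal_submodule_eq_span_isHomogeneous_one V
end

section
/- Let K be a field, let y_1,...,y_r, z_1,...,z_s be indeterminates, α_1,...,α_n ∈ K[y_1,...,y_r], β_1,...,β_n ∈ K[z_1,...,z_s]. Suppose the kernel P of the K-algebra map K[T_1,...,T_n] → K[α_1,...,α_n], T_i ↦ α_i, equals the kernel of the map T_i ↦ β_i into K[β_1,...,β_n], and is contained in the kernel of the map T_i ↦ α_i + β_i into K[y's, z's]. If P is homogeneous, then P is generated by linear forms. -/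
/-!
Let `J` be the ideal generated by the linear forms in `P`; we show by induction on `d` that
every homogeneous `p ∈ P` of degree `d` lies in `J`.

Identifying `K[T ⊕ T]` with `K[T] ⊗ K[T]`, the map `(α, β)` becomes a tensor product of maps,
and over a field its kernel is generated by `P ⊗ 1` and `1 ⊗ P`. So `P ≤ ker (α + β)` gives
`p(Y + Z) ∈ (P(Y), P(Z))`. Pick a linear substitution `s` that kills `J` and is the identity
modulo `J`. Applying `s` to both sets of variables and using the induction hypothesis,
`q = s(p)` satisfies `q(Y + Z) ∈ (Y)^d + (Z)^d`: `q(Y + Z)` has no mixed terms. Restricting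
`Z` to a coordinate line `t • e_j` and reading off the coefficients of `t^k` gives
`q = ∑ c_j T_j^d` and, if `q ≠ 0`, `d.choose k = 0` in `K` for `0 < k < d`, so that `x ↦ x^d`
is a ring endomorphism of `K`. Expanding the `c_j` in a basis of `K` over `K^d` writes
`q = ∑ ε_t ℓ_t^d` with linear `ℓ_t`, and comparing the coefficients of `∑ ε_t α(ℓ_t)^d = 0`
at `d`-th powers of monomials gives `α(ℓ_t) = 0`. Hence `q ∈ J`, and `p = (p - q) + q ∈ J`.
-/

open MvPolynomial TensorProduct

section TensorProduct

variable {K : Type*} [Field K]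

theorem Algebra.TensorProduct.map_ker_of_field {A B C D : Type*} [CommRing A] [CommRing B]
    [CommRing C] [CommRing D] [Algebra K A] [Algebra K B] [Algebra K C] [Algebra K D]
    (f : A →ₐ[K] C) (g : B →ₐ[K] D) :
    RingHom.ker (map f g) =
      (RingHom.ker f).map (includeLeft : A →ₐ[K] A ⊗[K] B) ⊔
        (RingHom.ker g).map (includeRight : B →ₐ[K] A ⊗[K] B) := by
  have hinj : Function.Injective (map f.range.val g.range.val) :=
    TensorProduct.map_injective_of_flat_flat _ _ Subtype.val_injective Subtype.val_injective
  have hfac :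
      map f g = (map f.range.val g.range.val).comp (map f.rangeRestrict g.rangeRestrict) := by
    rw [← map_comp, f.val_comp_rangeRestrict, g.val_comp_rangeRestrict]
  have hker : RingHom.ker (map f g) = RingHom.ker (map f.rangeRestrict g.rangeRestrict) := by
    ext x
    simp only [RingHom.mem_ker, hfac, AlgHom.comp_apply, map_eq_zero_iff _ hinj]
  rw [hker, map_ker _ _ f.rangeRestrict_surjective g.rangeRestrict_surjective,
    f.ker_rangeRestrict, g.ker_rangeRestrict]

variable {ι κ σ τ : Type*}

theorem MvPolynomial.tensorEquivSum_tmul_one (p : MvPolynomial ι K) :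
    tensorEquivSum K ι κ K (p ⊗ₜ 1) = rename Sum.inl p :=
  AlgHom.congr_fun
    (φ₁ := (tensorEquivSum K ι κ K).toAlgHom.comp Algebra.TensorProduct.includeLeft)
    (φ₂ := rename Sum.inl) (algHom_ext fun i => by simp) p

theorem MvPolynomial.tensorEquivSum_one_tmul (p : MvPolynomial κ K) :
    tensorEquivSum K ι κ K (1 ⊗ₜ p) = rename Sum.inr p :=
  AlgHom.congr_fun
    (φ₁ := (tensorEquivSum K ι κ K).toAlgHom.comp Algebra.TensorProduct.includeRight)
    (φ₂ := rename Sum.inr) (algHom_ext fun i => by simp) p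

theorem MvPolynomial.ker_aeval_sumElim_rename (α : ι → MvPolynomial σ K)
    (β : κ → MvPolynomial τ K) :
    RingHom.ker (aeval (Sum.elim (fun i => rename Sum.inl (α i)) fun i => rename Sum.inr (β i)) :
        MvPolynomial (ι ⊕ κ) K →ₐ[K] MvPolynomial (σ ⊕ τ) K) =
      (RingHom.ker (aeval α)).map (rename Sum.inl) ⊔
        (RingHom.ker (aeval β)).map (rename Sum.inr) := by
  set e := (tensorEquivSum K ι κ K).toAlgHom
  have hfac : (aeval (Sum.elim (fun i => rename Sum.inl (α i)) fun i => rename Sum.inr (β i)) :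
        MvPolynomial (ι ⊕ κ) K →ₐ[K] MvPolynomial (σ ⊕ τ) K).comp e =
      (tensorEquivSum K σ τ K).toAlgHom.comp (Algebra.TensorProduct.map (aeval α) (aeval β)) := by
    apply Algebra.TensorProduct.ext <;> refine algHom_ext fun i => ?_ <;>
      simp [e, tensorEquivSum_tmul_one, tensorEquivSum_one_tmul]
  have hker : RingHom.ker ((tensorEquivSum K σ τ K).toAlgHom.comp
      (Algebra.TensorProduct.map (aeval α) (aeval β))) =
      RingHom.ker (Algebra.TensorProduct.map (aeval α) (aeval β)) := by
    ext x
    simp [RingHom.mem_ker]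
  rw [← Ideal.map_comap_of_surjective e (tensorEquivSum K ι κ K).surjective (RingHom.ker _),
    AlgHom.comap_ker, hfac, hker, Algebra.TensorProduct.map_ker_of_field, Ideal.map_sup,
    Ideal.map_mapₐ, Ideal.map_mapₐ]
  congr 2 <;> refine algHom_ext fun i => ?_ <;> simp [e]

end TensorProduct

section IdealOfVars

variable {R σ : Type*} [CommSemiring R]

theorem MvPolynomial.IsHomogeneous.mem_pow_idealOfVars {p : MvPolynomial σ R} {k d : ℕ}
    (hp : p.IsHomogeneous k) (hdk : d ≤ k) : p ∈ idealOfVars σ R ^ d := by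
  rw [mem_pow_idealOfVars_iff]
  intro m hm
  have := hp (mem_support_iff.mp hm)
  rw [Finsupp.degree_eq_weight_one]
  exact this ▸ hdk

theorem MvPolynomial.map_aeval_pow_idealOfVars_le {A : Type*} [CommSemiring A] [Algebra R A]
    {g : σ → A} {I : Ideal A} (hg : ∀ i, g i ∈ I) (d : ℕ) :
    (idealOfVars σ R ^ d).map (aeval g) ≤ I ^ d := by
  rw [Ideal.map_pow]
  refine Ideal.pow_right_mono ?_ d
  rw [Ideal.map_span, Ideal.span_le]
  rintro _ ⟨_, ⟨i, rfl⟩, rfl⟩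
  simpa using hg i

theorem le_sup_pow_idealOfVars {P J : Ideal (MvPolynomial σ R)} {d : ℕ}
    (hhom : ∀ p ∈ P, ∀ k, homogeneousComponent k p ∈ P)
    (hlow : ∀ k < d, ∀ p ∈ P, p.IsHomogeneous k → p ∈ J) :
    P ≤ J ⊔ idealOfVars σ R ^ d := by
  intro p hp
  rw [← sum_homogeneousComponent p]
  refine Ideal.sum_mem _ fun k _ => ?_
  rcases lt_or_ge k d with hk | hk
  · exact Ideal.mem_sup_left (hlow k hk _ (hhom p hp k) (homogeneousComponent_isHomogeneous k p))
  · exact Ideal.mem_sup_right ((homogeneousComponent_isHomogeneous k p).mem_pow_idealOfVars hk)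

end IdealOfVars

section Coaddition

variable {R ι : Type*} [CommSemiring R]

/-- `p ↦ p(Y + Z)`, the comultiplication of the additive group. -/
noncomputable def coadd : MvPolynomial ι R →ₐ[R] MvPolynomial (ι ⊕ ι) R :=
  aeval fun i => X (Sum.inl i) + X (Sum.inr i)

theorem coadd_of_isHomogeneous_one {ℓ : MvPolynomial ι R} (hℓ : ℓ.IsHomogeneous 1) :
    coadd ℓ = rename Sum.inl ℓ + rename Sum.inr ℓ := by
  have hspan : Submodule.span R (Set.range X) ≤
      LinearMap.eqLocus (coadd : MvPolynomial ι R →ₐ[R] _).toLinearMap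
        ((rename Sum.inl).toLinearMap + (rename Sum.inr).toLinearMap) := by
    rw [Submodule.span_le]
    rintro _ ⟨i, rfl⟩
    simp [coadd]
  exact hspan (homogeneousSubmodule_one_eq_span_X (σ := ι) (R := R) ▸ hℓ)

theorem coadd_aeval_mem_map {s : ι → MvPolynomial ι R} (hs : ∀ i, (s i).IsHomogeneous 1)
    {I : Ideal (MvPolynomial ι R)} {p : MvPolynomial ι R}
    (hp : coadd p ∈ I.map (rename Sum.inl) ⊔ I.map (rename Sum.inr)) :
    coadd (aeval s p) ∈
      (I.map (aeval s)).map (rename Sum.inl) ⊔ (I.map (aeval s)).map (rename Sum.inr) := by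
  set π : MvPolynomial (ι ⊕ ι) R →ₐ[R] MvPolynomial (ι ⊕ ι) R :=
    aeval (Sum.elim (fun i => rename Sum.inl (s i)) fun i => rename Sum.inr (s i))
  have hcoadd : π.comp coadd = coadd.comp (aeval s) := algHom_ext fun i => by
    rw [AlgHom.comp_apply, AlgHom.comp_apply, aeval_X, coadd_of_isHomogeneous_one (hs i)]
    simp [π, coadd]
  have hinl : π.comp (rename Sum.inl) = (rename Sum.inl).comp (aeval s) :=
    algHom_ext fun i => by simp [π]
  have hinr : π.comp (rename Sum.inr) = (rename Sum.inr).comp (aeval s) :=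
    algHom_ext fun i => by simp [π]
  have := Ideal.mem_map_of_mem π hp
  rwa [Ideal.map_sup, Ideal.map_mapₐ, Ideal.map_mapₐ, hinl, hinr, ← Ideal.map_mapₐ,
    ← Ideal.map_mapₐ, ← AlgHom.comp_apply, hcoadd, AlgHom.comp_apply] at this

theorem monomial_erase_mul_X_pow (j : ι) (n : ι →₀ ℕ) (c : R) :
    monomial (n.erase j) c * X j ^ n j = monomial n c := by
  rw [X_pow_eq_monomial, monomial_mul, mul_one, Finsupp.erase_add_single]

section EvalShift

variable [DecidableEq ι]

/-- Evaluation of the second set of variables on the line `t • e_j`, so that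
`evalShift j (coadd q) = q(X + t • e_j)`. -/
noncomputable def evalShift (j : ι) :
    MvPolynomial (ι ⊕ ι) R →ₐ[R] Polynomial (MvPolynomial ι R) :=
  aeval (Sum.elim (fun i => Polynomial.C (X i)) fun i => if i = j then Polynomial.X else 0)

theorem evalShift_coadd_monomial (j : ι) (n : ι →₀ ℕ) (c : R) :
    evalShift j (coadd (monomial n c)) =
      Polynomial.C (monomial (n.erase j) c) * (Polynomial.X + Polynomial.C (X j)) ^ n j := by
  have hcomp : (evalShift j).comp (coadd : MvPolynomial ι R →ₐ[R] _) =
      aeval fun i => Polynomial.C (X i) + if i = j then Polynomial.X else 0 :=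
    algHom_ext fun i => by simp [coadd, evalShift]
  have herase : evalShift j (coadd (monomial (n.erase j) c)) =
      Polynomial.C (monomial (n.erase j) c) := by
    rw [← AlgHom.comp_apply, hcomp, aeval_monomial, monomial_eq, map_mul, Finsupp.prod,
      Finsupp.prod, map_prod]
    congr 1
    refine Finset.prod_congr rfl fun i hi => ?_
    have hij : i ≠ j := by rintro rfl; simp at hi
    simp [hij]
  rw [← monomial_erase_mul_X_pow j n c, map_mul, map_mul, herase, map_pow, map_pow]
  simp [coadd, evalShift, add_comm]

theorem coeff_X_pow_mul_coeff_evalShift_coadd (q : MvPolynomial ι R) (j : ι) (k : ℕ)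
    (m : ι →₀ ℕ) :
    coeff m (X j ^ k * (evalShift j (coadd q)).coeff k) = coeff m q * (m j).choose k := by
  induction q using MvPolynomial.induction_on' with
  | monomial n c =>
    have hpoly : X j ^ k * (monomial (n.erase j) c *
        (X j ^ (n j - k) * ((n j).choose k : MvPolynomial ι R))) =
          monomial n (c * (n j).choose k) := by
      rcases le_or_gt k (n j) with hk | hk
      · calc _ = monomial (n.erase j) c * X j ^ (k + (n j - k)) *
              ((n j).choose k : MvPolynomial ι R) := by ring
          _ = _ := by
            rw [Nat.add_sub_cancel' hk, monomial_erase_mul_X_pow, ← map_natCast C, mul_comm,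
              C_mul_monomial, mul_comm]
      · simp [Nat.choose_eq_zero_of_lt hk]
    rw [evalShift_coadd_monomial, Polynomial.coeff_C_mul, Polynomial.coeff_X_add_C_pow, hpoly,
      coeff_monomial, coeff_monomial]
    split_ifs with h
    · rw [h]
    · rw [zero_mul]
  | add p q hp hq => simp only [map_add, Polynomial.coeff_add, mul_add, coeff_add, hp, hq, add_mul]

theorem coeff_evalShift_mem_pow_idealOfVars {j : ι} {d k : ℕ} (hk : k < d)
    {y : MvPolynomial (ι ⊕ ι) R}
    (hy : y ∈ (idealOfVars ι R ^ d).map (rename Sum.inl) ⊔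
      (idealOfVars ι R ^ d).map (rename Sum.inr)) :
    (evalShift j y).coeff k ∈ idealOfVars ι R ^ d := by
  obtain ⟨a, ha, b, hb, rfl⟩ := Submodule.mem_sup.mp hy
  rw [map_add, Polynomial.coeff_add]
  refine add_mem ?_ ?_
  · have hinl : (evalShift j).comp (rename Sum.inl) =
        (Polynomial.CAlgHom : MvPolynomial ι R →ₐ[R] _) :=
      algHom_ext fun i => by simp [evalShift]
    have := Ideal.mem_map_of_mem (evalShift j) ha
    rw [Ideal.map_mapₐ, hinl] at this
    exact Ideal.mem_map_C_iff.mp this k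
  · have hinr : (evalShift j).comp (rename Sum.inr) = aeval (R := R)
        fun i => if i = j then (Polynomial.X : Polynomial (MvPolynomial ι R)) else 0 :=
      algHom_ext fun i => by simp [evalShift]
    have hX : ∀ i, (if i = j then (Polynomial.X : Polynomial (MvPolynomial ι R)) else 0) ∈
        Ideal.span {Polynomial.X} := fun i => by
      split_ifs
      exacts [Ideal.mem_span_singleton_self _, zero_mem _]
    have := Ideal.mem_map_of_mem (evalShift j) hb
    rw [Ideal.map_mapₐ, hinr] at this
    have hmem := map_aeval_pow_idealOfVars_le hX d this
    rw [Ideal.span_singleton_pow] at hmem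
    obtain ⟨c, hc⟩ := Ideal.mem_span_singleton'.mp hmem
    rw [← hc, Polynomial.coeff_mul_X_pow', if_neg (by omega)]
    exact zero_mem _

end EvalShift

variable {q : MvPolynomial ι R} {d : ℕ}

theorem coeff_mul_choose_eq_zero_of_coadd_mem
    (hq : coadd q ∈ (idealOfVars ι R ^ d).map (rename Sum.inl) ⊔
      (idealOfVars ι R ^ d).map (rename Sum.inr))
    (j : ι) {k : ℕ} (hkd : k < d) {m : ι →₀ ℕ} (hm : m.degree < d + k) :
    coeff m q * (m j).choose k = 0 := by
  classical
  rw [← coeff_X_pow_mul_coeff_evalShift_coadd]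
  refine (mem_pow_idealOfVars_iff' _ _).mp ?_ m (by omega)
  rw [add_comm, pow_add]
  exact Ideal.mul_mem_mul ((isHomogeneous_X_pow j k).mem_pow_idealOfVars le_rfl)
    (coeff_evalShift_mem_pow_idealOfVars hkd hq)

theorem exists_eq_single_of_coadd_mem (hd : 0 < d) (hqd : q.IsHomogeneous d)
    (hq : coadd q ∈ (idealOfVars ι R ^ d).map (rename Sum.inl) ⊔
      (idealOfVars ι R ^ d).map (rename Sum.inr))
    {m : ι →₀ ℕ} (hm : m ∈ q.support) : ∃ j, m = Finsupp.single j d := by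
  have hdeg : m.degree = d := by
    rw [Finsupp.degree_eq_weight_one]
    exact hqd (mem_support_iff.mp hm)
  have hm0 : m ≠ 0 := by
    rintro rfl
    simp at hdeg
    omega
  obtain ⟨j, hj⟩ := Finsupp.ne_iff.mp hm0
  rw [Finsupp.coe_zero, Pi.zero_apply] at hj
  have hmj : d ≤ m j := by
    by_contra! hlt
    have := coeff_mul_choose_eq_zero_of_coadd_mem hq j hlt (m := m) (by omega)
    rw [Nat.choose_self, Nat.cast_one, mul_one] at this
    exact mem_support_iff.mp hm this
  have hsplit := congrArg Finsupp.degree (Finsupp.erase_add_single j m)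
  rw [map_add, Finsupp.degree_single, hdeg] at hsplit
  have herase : m.erase j = 0 := (Finsupp.degree_eq_zero_iff _).mp (by omega)
  refine ⟨j, ?_⟩
  rw [← Finsupp.erase_add_single j m, herase, zero_add]
  congr 1
  omega

theorem choose_eq_zero_of_coadd_mem [NoZeroDivisors R] (hd : 0 < d) (hqd : q.IsHomogeneous d)
    (hq : coadd q ∈ (idealOfVars ι R ^ d).map (rename Sum.inl) ⊔
      (idealOfVars ι R ^ d).map (rename Sum.inr))
    (hq0 : q ≠ 0) {k : ℕ} (hk : 0 < k) (hkd : k < d) : (d.choose k : R) = 0 := by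
  obtain ⟨m, hm⟩ := Finset.nonempty_iff_ne_empty.mpr (mt support_eq_empty.mp hq0)
  obtain ⟨j, rfl⟩ := exists_eq_single_of_coadd_mem hd hqd hq hm
  have := coeff_mul_choose_eq_zero_of_coadd_mem hq j hkd (m := Finsupp.single j d)
    (by rw [Finsupp.degree_single]; omega)
  rw [Finsupp.single_eq_same] at this
  exact (mul_eq_zero.mp this).resolve_left (mem_support_iff.mp hm)

theorem eq_sum_smul_X_pow [Fintype ι] (hd : d ≠ 0)
    (h : ∀ m ∈ q.support, ∃ j, m = Finsupp.single j d) :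
    q = ∑ j, coeff (Finsupp.single j d) q • X j ^ d := by
  classical
  ext m
  simp only [coeff_sum, coeff_smul, coeff_X_pow, smul_eq_mul, mul_ite, mul_one, mul_zero]
  by_cases hm : m ∈ q.support
  · obtain ⟨j, rfl⟩ := h m hm
    rw [Finset.sum_eq_single j (fun i _ hij => if_neg (mt (Finsupp.single_left_inj hd).mp hij))
      (by simp), if_pos rfl]
  · rw [notMem_support_iff.mp hm]
    refine (Finset.sum_eq_zero fun i _ => ?_).symm
    split_ifs with hi
    · rw [hi, notMem_support_iff.mp hm]
    · rfl

end Coaddition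

section LinearForms

variable {R ι : Type*}

noncomputable def linearFormsIdeal [CommSemiring R] (P : Ideal (MvPolynomial ι R)) :
    Ideal (MvPolynomial ι R) :=
  Ideal.span {ℓ | ℓ ∈ P ∧ ℓ.IsHomogeneous 1}

theorem linearFormsIdeal_le [CommSemiring R] (P : Ideal (MvPolynomial ι R)) :
    linearFormsIdeal P ≤ P :=
  Ideal.span_le.mpr fun _ h => h.1

theorem sub_aeval_mem [CommRing R] {J : Ideal (MvPolynomial ι R)} {s : ι → MvPolynomial ι R}
    (hs : ∀ i, X i - s i ∈ J) (p : MvPolynomial ι R) : p - aeval s p ∈ J := by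
  have : (Ideal.Quotient.mkₐ R J).comp (aeval s) = Ideal.Quotient.mkₐ R J :=
    algHom_ext fun i => by
      rw [AlgHom.comp_apply, aeval_X, Ideal.Quotient.mkₐ_eq_mk, Ideal.Quotient.eq, ← neg_sub]
      exact J.neg_mem (hs i)
  rw [← Ideal.Quotient.eq, ← Ideal.Quotient.mkₐ_eq_mk R, ← AlgHom.comp_apply, this]

theorem exists_retraction_linearFormsIdeal {K : Type*} [Field K] (P : Ideal (MvPolynomial ι K)) :
    ∃ s : ι → MvPolynomial ι K, (∀ i, (s i).IsHomogeneous 1) ∧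
      (∀ i, X i - s i ∈ linearFormsIdeal P) ∧ linearFormsIdeal P ≤ RingHom.ker (aeval s) := by
  set V := P.restrictScalars K ⊓ homogeneousSubmodule ι K 1
  obtain ⟨W, hVW⟩ := Submodule.exists_isCompl V
  set π := V.projectionOnto W hVW
  have hπ : ∀ i, ((π (X i) : V) : MvPolynomial ι K) ∈ V := fun i => (π (X i)).2
  refine ⟨fun i => X i - (π (X i) : MvPolynomial ι K), fun i => ?_, fun i => ?_, ?_⟩
  · exact (isHomogeneous_X K i).sub (Submodule.mem_inf.mp (hπ i)).2
  · rw [sub_sub_cancel]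
    exact Ideal.subset_span ⟨(Submodule.mem_inf.mp (hπ i)).1, (Submodule.mem_inf.mp (hπ i)).2⟩
  · have hlin : homogeneousSubmodule ι K 1 ≤ LinearMap.eqLocus
        (aeval fun i => X i - (π (X i) : MvPolynomial ι K)).toLinearMap
        (LinearMap.id - V.subtype ∘ₗ π) := by
      rw [homogeneousSubmodule_one_eq_span_X, Submodule.span_le]
      rintro _ ⟨i, rfl⟩
      simp
    rw [linearFormsIdeal, Ideal.span_le]
    rintro ℓ ⟨hℓP, hℓ⟩
    have := hlin hℓ
    simp only [LinearMap.mem_eqLocus, AlgHom.toLinearMap_apply] at this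
    rw [SetLike.mem_coe, RingHom.mem_ker, this]
    simp [π, Submodule.projectionOnto_apply_left hVW ⟨ℓ, hℓP, hℓ⟩]

end LinearForms

section Frobenius

variable {A : Type*} [CommSemiring A] {d : ℕ}

theorem add_pow_eq_of_choose_eq_zero (hd : d ≠ 0)
    (hchoose : ∀ k, 0 < k → k < d → (d.choose k : A) = 0) (a b : A) :
    (a + b) ^ d = a ^ d + b ^ d := by
  obtain ⟨e, rfl⟩ := Nat.exists_eq_succ_of_ne_zero hd
  rw [add_pow, Finset.sum_range_succ, Finset.sum_range_succ',
    Finset.sum_eq_zero fun i hi => by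
      rw [hchoose (i + 1) i.succ_pos (by simpa using Finset.mem_range.mp hi), mul_zero]]
  simp [add_comm]

/-- In characteristic `p` the hypothesis forces `d` to be a power of `p`, and `powRingHom` is an
iterate of the Frobenius endomorphism. -/
def powRingHom (A : Type*) [CommSemiring A] (hd : d ≠ 0)
    (hchoose : ∀ k, 0 < k → k < d → (d.choose k : A) = 0) : A →+* A where
  toFun x := x ^ d
  map_one' := one_pow d
  map_mul' x y := mul_pow x y d
  map_zero' := zero_pow hd
  map_add' := add_pow_eq_of_choose_eq_zero hd hchoose

theorem powRingHom_apply (hd : d ≠ 0) (hchoose : ∀ k, 0 < k → k < d → (d.choose k : A) = 0)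
    (x : A) : powRingHom A hd hchoose x = x ^ d := rfl

variable {σ : Type*}

theorem MvPolynomial.natCast_choose_eq_zero
    (hchoose : ∀ k, 0 < k → k < d → (d.choose k : A) = 0) :
    ∀ k, 0 < k → k < d → (d.choose k : MvPolynomial σ A) = 0 := fun k hk hkd => by
  rw [← map_natCast (C : A →+* MvPolynomial σ A), hchoose k hk hkd, map_zero]

theorem MvPolynomial.coeff_nsmul_pow (hd : d ≠ 0)
    (hchoose : ∀ k, 0 < k → k < d → (d.choose k : A) = 0) (f : MvPolynomial σ A)
    (m : σ →₀ ℕ) : coeff (d • m) (f ^ d) = coeff m f ^ d := by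
  have : powRingHom (MvPolynomial σ A) hd (natCast_choose_eq_zero hchoose) =
      (expand d : MvPolynomial σ A →ₐ[A] _).toRingHom.comp (map (powRingHom A hd hchoose)) :=
    ringHom_ext (fun a => by simp [powRingHom_apply]) (fun i => by simp [powRingHom_apply])
  rw [← powRingHom_apply hd (natCast_choose_eq_zero hchoose), this]
  simp [coeff_expand_smul _ hd, coeff_map, powRingHom_apply]

variable {K : Type*} [Field K]

theorem eq_zero_of_sum_smul_pow_eq_zero {T : Type*} [Fintype T] (hd : d ≠ 0)
    (hchoose : ∀ k, 0 < k → k < d → (d.choose k : K) = 0) {ε : T → K}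
    (hε : LinearIndependent (powRingHom K hd hchoose).fieldRange ε) {f : T → MvPolynomial σ K}
    (hf : ∑ t, ε t • f t ^ d = 0) (t : T) : f t = 0 := by
  ext m
  have hcoeff := congrArg (coeff (d • m)) hf
  simp only [coeff_sum, coeff_smul, coeff_nsmul_pow hd hchoose, coeff_zero, smul_eq_mul]
    at hcoeff
  have := Fintype.linearIndependent_iff.mp hε
    (fun t => ⟨coeff m (f t) ^ d, coeff m (f t), rfl⟩) (by
      refine (Finset.sum_congr rfl fun i _ => ?_).trans hcoeff
      exact mul_comm _ _) t
  simpa [hd] using congrArg Subtype.val this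

theorem sum_smul_X_pow_mem_linearFormsIdeal {ι : Type*} [Fintype ι] (α : ι → MvPolynomial σ K)
    (hd : d ≠ 0) (hchoose : ∀ k, 0 < k → k < d → (d.choose k : K) = 0) (c : ι → K)
    (hc : aeval α (∑ j, c j • (X j : MvPolynomial ι K) ^ d) = 0) :
    ∑ j, c j • (X j : MvPolynomial ι K) ^ d ∈ linearFormsIdeal (RingHom.ker (aeval α)) := by
  set L := (powRingHom K hd hchoose).fieldRange
  set W := Submodule.span L (Set.range c)
  have : FiniteDimensional L W := FiniteDimensional.span_of_finite L (Set.finite_range c)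
  set B := Module.finBasis L W
  have hcW : ∀ j, c j ∈ W := fun j => Submodule.subset_span ⟨j, rfl⟩
  choose ν hν using fun j t => (B.repr ⟨c j, hcW j⟩ t).2
  have hc_eq : ∀ j, c j = ∑ t, ν j t ^ d * (B t : K) := by
    intro j
    have := congrArg Subtype.val (B.sum_repr ⟨c j, hcW j⟩)
    rw [Submodule.coe_sum] at this
    refine this.symm.trans (Finset.sum_congr rfl fun t _ => ?_)
    rw [← powRingHom_apply hd hchoose, hν j t]
    rfl
  set ℓ : Fin (Module.finrank L W) → MvPolynomial ι K := fun t => ∑ j, C (ν j t) * X j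
  have hℓ : ∀ t, (ℓ t).IsHomogeneous 1 := fun t =>
    IsHomogeneous.sum _ _ _ fun j _ => (isHomogeneous_X K j).C_mul _
  have hpow : ∀ t, ℓ t ^ d = ∑ j, C (ν j t ^ d) * X j ^ d := by
    intro t
    rw [← powRingHom_apply hd (natCast_choose_eq_zero hchoose), map_sum]
    simp [powRingHom_apply, mul_pow]
  have hsum : ∑ j, c j • (X j : MvPolynomial ι K) ^ d = ∑ t, (B t : K) • ℓ t ^ d := by
    simp_rw [hpow, Finset.smul_sum, hc_eq, Finset.sum_smul, smul_eq_C_mul, ← mul_assoc, ← map_mul]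
    rw [Finset.sum_comm]
    simp_rw [mul_comm]
  have hli : LinearIndependent L fun t => (B t : K) :=
    B.linearIndependent.map' W.subtype (Submodule.ker_subtype W)
  have hker : ∀ t, aeval α (ℓ t) = 0 := eq_zero_of_sum_smul_pow_eq_zero hd hchoose hli (by
    rw [← hc, hsum]
    simp)
  rw [hsum, linearFormsIdeal]
  refine Ideal.sum_mem _ fun t _ => ?_
  rw [smul_eq_C_mul]
  refine Ideal.mul_mem_left _ _
    (Ideal.pow_mem_of_mem _ (Ideal.subset_span ?_) d (Nat.pos_of_ne_zero hd))
  exact ⟨RingHom.mem_ker.mpr (hker t), hℓ t⟩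

end Frobenius

section Induction

variable {K ι σ τ : Type*} [Field K]

theorem eq_zero_of_aeval_eq_zero_of_isHomogeneous_zero {R : Type*} [CommSemiring R]
    {α : ι → MvPolynomial σ R} {p : MvPolynomial ι R} (hp : aeval α p = 0)
    (hp0 : p.IsHomogeneous 0) : p = 0 := by
  rw [totalDegree_eq_zero_iff_eq_C.mp (Nat.le_zero.mp hp0.totalDegree_le)] at hp ⊢
  simpa using hp

theorem coadd_mem_of_le_ker_add (α : ι → MvPolynomial σ K) (β : ι → MvPolynomial τ K)
    {P : Ideal (MvPolynomial ι K)} (hα : P = RingHom.ker (aeval α))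
    (hβ : P = RingHom.ker (aeval β))
    (hsum : P ≤ RingHom.ker (aeval fun i => rename Sum.inl (α i) + rename Sum.inr (β i) :
      MvPolynomial ι K →ₐ[K] MvPolynomial (σ ⊕ τ) K))
    {p : MvPolynomial ι K} (hp : p ∈ P) :
    coadd p ∈ P.map (rename Sum.inl) ⊔ P.map (rename Sum.inr) := by
  have hcomp : (aeval (Sum.elim (fun i => rename Sum.inl (α i)) fun i => rename Sum.inr (β i)) :
        MvPolynomial (ι ⊕ ι) K →ₐ[K] MvPolynomial (σ ⊕ τ) K).comp coadd =
      aeval fun i => rename Sum.inl (α i) + rename Sum.inr (β i) :=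
    algHom_ext fun i => by simp [coadd]
  have hQ : P.map (rename Sum.inl) ⊔ P.map (rename Sum.inr) =
      (RingHom.ker (aeval α)).map (rename Sum.inl) ⊔
        (RingHom.ker (aeval β)).map (rename Sum.inr) := by
    rw [← hα, ← hβ]
  rw [hQ, ← ker_aeval_sumElim_rename, RingHom.mem_ker, ← AlgHom.comp_apply, hcomp]
  exact hsum hp

theorem mem_linearFormsIdeal_of_isHomogeneous [Fintype ι] (α : ι → MvPolynomial σ K)
    {P : Ideal (MvPolynomial ι K)} (hα : P = RingHom.ker (aeval α))
    (hco : ∀ p ∈ P, coadd p ∈ P.map (rename Sum.inl) ⊔ P.map (rename Sum.inr))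
    (hhom : ∀ p ∈ P, ∀ k, homogeneousComponent k p ∈ P) {d : ℕ}
    (hlow : ∀ k < d, ∀ p ∈ P, p.IsHomogeneous k → p ∈ linearFormsIdeal P)
    {p : MvPolynomial ι K} (hp : p ∈ P) (hpd : p.IsHomogeneous d) : p ∈ linearFormsIdeal P := by
  rcases Nat.eq_zero_or_pos d with rfl | hd
  · rw [eq_zero_of_aeval_eq_zero_of_isHomogeneous_zero (hα ▸ hp) hpd]
    exact zero_mem _
  obtain ⟨s, hs, hXs, hs_ker⟩ := exists_retraction_linearFormsIdeal P
  set q := aeval s p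
  have hpq : p - q ∈ linearFormsIdeal P := sub_aeval_mem hXs p
  have hqP : q ∈ P := by simpa using P.sub_mem hp (linearFormsIdeal_le P hpq)
  have hqd : q.IsHomogeneous d := by simpa only [one_mul] using hpd.aeval s hs
  -- The part of `P` below degree `d` lies in `J` (induction), which `s` kills.
  have hmap : P.map (aeval s) ≤ idealOfVars ι K ^ d := by
    rw [Ideal.map_le_iff_le_comap]
    refine (le_sup_pow_idealOfVars hhom hlow).trans (sup_le ?_ ?_)
    · intro x hx
      rw [Ideal.mem_comap, RingHom.mem_ker.mp (hs_ker hx)]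
      exact zero_mem _
    · rw [← Ideal.map_le_iff_le_comap]
      exact map_aeval_pow_idealOfVars_le
        (fun i => pow_one (idealOfVars ι K) ▸ (hs i).mem_pow_idealOfVars le_rfl) d
  have hcoq : coadd q ∈ (idealOfVars ι K ^ d).map (rename Sum.inl) ⊔
      (idealOfVars ι K ^ d).map (rename Sum.inr) :=
    sup_le_sup (Ideal.map_mono (f := rename Sum.inl) hmap)
      (Ideal.map_mono (f := rename Sum.inr) hmap) (coadd_aeval_mem_map hs (hco p hp))
  rw [← sub_add_cancel p q]
  refine add_mem hpq ?_
  rcases eq_or_ne q 0 with hq0 | hq0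
  · rw [hq0]
    exact zero_mem _
  have hqsum := eq_sum_smul_X_pow hd.ne' fun m hm => exists_eq_single_of_coadd_mem hd hqd hcoq hm
  rw [hqsum, hα]
  refine sum_smul_X_pow_mem_linearFormsIdeal α hd.ne'
    (fun k hk hkd => choose_eq_zero_of_coadd_mem hd hqd hcoq hq0 hk hkd) _ ?_
  rw [← hqsum, ← RingHom.mem_ker, ← hα]
  exact hqP

end Induction

/-- **Linear Lemma.** Let `α_i ∈ K[y_1,…,y_r]` and `β_i ∈ K[z_1,…,z_s]`. Suppose the kernel
`P` of `T_i ↦ α_i` equals the kernel of `T_i ↦ β_i` and is contained in the kernel of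
`T_i ↦ α_i + β_i` (inside `K[y's, z's]`). If `P` is homogeneous, it is generated by linear
forms. -/
theorem kernel_generated_by_linear_forms
    (K : Type*) [Field K] (n r s : ℕ)
    (α : Fin n → MvPolynomial (Fin r) K) (β : Fin n → MvPolynomial (Fin s) K)
    (P : Ideal (MvPolynomial (Fin n) K))
    (hP : P = RingHom.ker (MvPolynomial.aeval α : MvPolynomial (Fin n) K →ₐ[K] _))
    (hβ : P = RingHom.ker (MvPolynomial.aeval β : MvPolynomial (Fin n) K →ₐ[K] _))
    (hsum : P ≤ RingHom.ker (MvPolynomial.aeval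
      (fun i => MvPolynomial.rename Sum.inl (α i) + MvPolynomial.rename Sum.inr (β i) :
        Fin n → MvPolynomial (Fin r ⊕ Fin s) K) : MvPolynomial (Fin n) K →ₐ[K] _))
    (hhom : ∀ p ∈ P, ∀ k : ℕ, MvPolynomial.homogeneousComponent k p ∈ P) :
    P = Ideal.span {p : MvPolynomial (Fin n) K | p ∈ P ∧ p.IsHomogeneous 1} := by
  have hco : ∀ p ∈ P, coadd p ∈ P.map (rename Sum.inl) ⊔ P.map (rename Sum.inr) :=
    fun p => coadd_mem_of_le_ker_add α β hP hβ hsum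
  have hgraded : ∀ d, ∀ p ∈ P, p.IsHomogeneous d → p ∈ linearFormsIdeal P := by
    intro d
    induction d using Nat.strong_induction_on with
    | _ d ih => exact fun p => mem_linearFormsIdeal_of_isHomogeneous α hP hco hhom ih
  refine le_antisymm (fun p hp => ?_) (linearFormsIdeal_le P)
  rw [← sum_homogeneousComponent p]
  exact Ideal.sum_mem _ fun k _ =>
    hgraded k _ (hhom p hp k) (homogeneousComponent_isHomogeneous k p)
end

section
/- Let K ⊆ L be a field extension, let P be an ideal of K[T_1,...,T_n], and suppose the extension of P to L[T_1,...,T_n] is generated by its elements of degree 1. Then P is generated by its elements of degree 1. -/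
/-!
For a `K`-linear functional `φ : L → K`, applying `φ` to the coefficients is `K[T]`-linear, so it
maps the extension of an ideal `I` into `I` and preserves linear forms; expanding coefficients in
a `K`-basis of `L` shows conversely that a polynomial lies in the extension of `I` as soon as all
these images lie in `I`. Hence every linear form in the extension of `P` lies in the extension of
the ideal `J ⊆ P` generated by the linear forms of `P`, and a `K`-linear retraction `L → K` shows
that `P ⊆ J` follows from the corresponding inclusion of extensions.
-/

namespace MvPolynomial

variable {σ K L : Type*}

section CommSemiring

variable [CommSemiring K] [CommSemiring L] [Algebra K L]

noncomputable def coeffMap (φ : L →ₗ[K] K) : MvPolynomial σ L →ₗ[K] MvPolynomial σ K where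
  toFun q := .ofCoeff (Finsupp.mapRange φ φ.map_zero (AddMonoidAlgebra.coeff q))
  map_add' p q := by ext m; simp [coeff]
  map_smul' c q := by ext m; simp [coeff]

@[simp] lemma coeff_coeffMap (φ : L →ₗ[K] K) (q : MvPolynomial σ L) (m : σ →₀ ℕ) :
    (coeffMap φ q).coeff m = φ (q.coeff m) := rfl

lemma coeffMap_map {φ : L →ₗ[K] K} (hφ : ∀ k, φ (algebraMap K L k) = k)
    (p : MvPolynomial σ K) : coeffMap φ (map (algebraMap K L) p) = p := by
  ext m
  rw [coeff_coeffMap, coeff_map, hφ]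

lemma coeffMap_mul_map (φ : L →ₗ[K] K) (c : MvPolynomial σ L) (p : MvPolynomial σ K) :
    coeffMap φ (c * map (algebraMap K L) p) = coeffMap φ c * p := by
  classical
  ext m
  simp only [coeff_coeffMap, coeff_mul, coeff_map, map_sum]
  refine Finset.sum_congr rfl fun x _ => ?_
  rw [mul_comm, ← Algebra.smul_def, map_smul, smul_eq_mul, mul_comm]

lemma IsHomogeneous.coeffMap {q : MvPolynomial σ L} {d : ℕ} (hq : q.IsHomogeneous d)
    (φ : L →ₗ[K] K) : (coeffMap φ q).IsHomogeneous d := fun m hm =>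
  hq fun h => hm (by rw [coeff_coeffMap, h, map_zero])

lemma coeffMap_mem_of_mem_map (φ : L →ₗ[K] K) {I : Ideal (MvPolynomial σ K)}
    {q : MvPolynomial σ L} (hq : q ∈ I.map (map (algebraMap K L))) : coeffMap φ q ∈ I := by
  suffices ∀ c, coeffMap φ (c * q) ∈ I by simpa using this 1
  induction hq using Submodule.span_induction with
  | mem x hx =>
    obtain ⟨p, hp, rfl⟩ := hx
    exact fun c => coeffMap_mul_map φ c p ▸ I.mul_mem_left _ hp
  | zero => simp
  | add x y _ _ hx hy => exact fun c => by rw [mul_add, map_add]; exact I.add_mem (hx c) (hy c)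
  | smul a x _ hx => exact fun c => by rw [smul_eq_mul, ← mul_assoc]; exact hx _

lemma exists_sum_basis_mul_map_coeffMap {ι : Type*} (B : Module.Basis ι K L)
    (q : MvPolynomial σ L) :
    ∃ F : Finset ι, q = ∑ i ∈ F, C (B i) * map (algebraMap K L) (coeffMap (B.coord i) q) := by
  classical
  refine ⟨q.support.biUnion fun m => (B.repr (q.coeff m)).support, ?_⟩
  ext m
  have hsupp : (B.repr (q.coeff m)).support ⊆
      q.support.biUnion fun m => (B.repr (q.coeff m)).support := by
    intro i hi
    refine Finset.mem_biUnion.mpr ⟨m, mem_support_iff.mpr fun h => ?_, hi⟩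
    simp [h] at hi
  simp only [coeff_sum, coeff_C_mul, coeff_map, coeff_coeffMap, Module.Basis.coord_apply,
    mul_comm (B _), ← Algebra.smul_def]
  rw [← Finsupp.sum_of_support_subset _ hsupp (fun i c => c • B i) fun i _ => zero_smul K (B i),
    ← Finsupp.linearCombination_apply, B.linearCombination_repr]

lemma mem_map_map_algebraMap_iff [Module.Free K L] {I : Ideal (MvPolynomial σ K)}
    {q : MvPolynomial σ L} :
    q ∈ I.map (map (algebraMap K L)) ↔ ∀ φ : L →ₗ[K] K, coeffMap φ q ∈ I := by
  refine ⟨fun hq φ => coeffMap_mem_of_mem_map φ hq, fun h => ?_⟩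
  let B := Module.Free.chooseBasis K L
  obtain ⟨F, hF⟩ := exists_sum_basis_mul_map_coeffMap B q
  rw [hF]
  exact Ideal.sum_mem _ fun i _ => Ideal.mul_mem_left _ _ (Ideal.mem_map_of_mem _ (h _))

lemma span_isHomogeneous_map_le [Module.Free K L] (I : Ideal (MvPolynomial σ K)) (d : ℕ) :
    Ideal.span {q | q ∈ I.map (map (algebraMap K L)) ∧ q.IsHomogeneous d} ≤
      (Ideal.span {p | p ∈ I ∧ p.IsHomogeneous d}).map (map (algebraMap K L)) := by
  refine Ideal.span_le.mpr fun q ⟨hq, hd⟩ => mem_map_map_algebraMap_iff.mpr fun φ => ?_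
  exact Ideal.subset_span ⟨mem_map_map_algebraMap_iff.mp hq φ, hd.coeffMap φ⟩

end CommSemiring

lemma le_of_map_le_map [Field K] [CommRing L] [Nontrivial L] [Algebra K L]
    {I J : Ideal (MvPolynomial σ K)}
    (h : I.map (map (algebraMap K L)) ≤ J.map (map (algebraMap K L))) : I ≤ J := by
  obtain ⟨r, hr⟩ := (Algebra.linearMap K L).exists_leftInverse_of_injective
    (LinearMap.ker_eq_bot.mpr (FaithfulSMul.algebraMap_injective K L))
  have hr' (k : K) : r (algebraMap K L k) = k := LinearMap.congr_fun hr k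
  intro p hp
  rw [← coeffMap_map hr' p]
  exact coeffMap_mem_of_mem_map r (h (Ideal.mem_map_of_mem _ hp))

end MvPolynomial

open MvPolynomial

/-- If the extension of an ideal `P ⊆ K[T_1,…,T_n]` to `L[T_1,…,T_n]` (for a field extension
`K ⊆ L`) is generated by its elements of degree 1, then so is `P`. -/
theorem generated_by_linear_forms_descends
    (K L : Type*) [Field K] [Field L] [Algebra K L] (n : ℕ)
    (P : Ideal (MvPolynomial (Fin n) K))
    (hext : P.map (MvPolynomial.map (algebraMap K L)) =
      Ideal.span {q : MvPolynomial (Fin n) L |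
        q ∈ P.map (MvPolynomial.map (algebraMap K L)) ∧ q.IsHomogeneous 1}) :
    P = Ideal.span {p : MvPolynomial (Fin n) K | p ∈ P ∧ p.IsHomogeneous 1} := by
  refine le_antisymm (le_of_map_le_map (L := L) ?_) (Ideal.span_le.mpr fun p hp => hp.1)
  rw [hext]
  exact span_isHomogeneous_map_le P 1
end

section
/- Define B(m,n,0) = m(n+1) and, for h ≥ 1, B(m,n,h) = (m+h)(n^3+n^2+n+1) + h(n+1) + B((m+h)n^2, n, h-1). Then for all h ≥ 0, B(m,n,h) ≥ (m+h)((n+1)(n^2)^h + g(n)·θ_h(n^2)), where g(n) = n^3+n^2+n+1 and θ_h(t) = 1 + t + ... + t^{h-1} (with θ_0 = 0). -/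
/-- The recursively defined bound `B(m,n,h)` from the paper. -/
def Bfun : ℕ → ℕ → ℕ → ℕ
  | m, n, 0 => m * (n + 1)
  | m, n, h + 1 =>
      (m + (h + 1)) * (n ^ 3 + n ^ 2 + n + 1) + (h + 1) * (n + 1) +
        Bfun ((m + (h + 1)) * n ^ 2) n h

/-- `θ_h(t) = 1 + t + … + t^{h-1}`. -/
def theta (h t : ℕ) : ℕ := ∑ i ∈ Finset.range h, t ^ i

/-! Writing `L_h = (n+1)(n²)^h + g(n) θ_h(n²)`, one has `L_{h+1} = g(n) + n² L_h`. Unfolding one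
step of `B`, the induction hypothesis bounds the recursive call by `((m+h+1)n² + h) L_h`, and
discarding the surplus terms `h L_h` and `(h+1)(n+1)` leaves exactly `(m+h+1) L_{h+1}`. -/

theorem theta_succ (h t : ℕ) : theta (h + 1) t = t * theta h t + 1 :=
  geom_sum_succ

/-- Lower bound: `B(m,n,h) ≥ (m+h)((n+1)(n²)^h + g(n)·θ_h(n²))` with `g(n) = n³+n²+n+1`. -/
theorem Bfun_lower_bound (m n h : ℕ) :
    (m + h) * ((n + 1) * (n ^ 2) ^ h + (n ^ 3 + n ^ 2 + n + 1) * theta h (n ^ 2)) ≤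
      Bfun m n h := by
  induction h generalizing m with
  | zero => simp [Bfun, theta]
  | succ h ih =>
    set g := n ^ 3 + n ^ 2 + n + 1
    set L := (n + 1) * (n ^ 2) ^ h + g * theta h (n ^ 2)
    have hL : (n + 1) * (n ^ 2) ^ (h + 1) + g * theta (h + 1) (n ^ 2) = g + n ^ 2 * L := by
      rw [theta_succ]
      ring
    calc (m + (h + 1)) * ((n + 1) * (n ^ 2) ^ (h + 1) + g * theta (h + 1) (n ^ 2))
        = (m + (h + 1)) * g + (m + (h + 1)) * n ^ 2 * L := by rw [hL]; ring
      _ ≤ (m + (h + 1)) * g + ((m + (h + 1)) * n ^ 2 + h) * L := by gcongr; omega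
      _ ≤ (m + (h + 1)) * g + Bfun ((m + (h + 1)) * n ^ 2) n h := by gcongr; exact ih _
      _ ≤ Bfun m n (h + 1) := by
        rw [Bfun, Nat.add_right_comm]
        exact Nat.le_add_right _ _
end
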